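/- arXiv:2007.09172 — 6 statements merged into one kernel-verified Lean document; each statement's English description precedes it below -/
import Mathlib

section
/- For a Poisson random variable with integer mean k ≥ 1, the probability of being at most k-1 is at most 1/2; equivalently, e^{-k} · Σ_{i=0}^{k-1} k^i/i! ≤ 1/2. -/
lemma fact_bound (k j : ℕ) (hj : j ≤ k - 1) (hk : 0 < k) :
    Nat.factorial (k + j) ≤ k ^ (2 * j + 1) * Nat.factorial (k - 1 - j) := by
  induction j with
  | zero =>
    simp only [Nat.add_zero, Nat.sub_zero, Nat.mul_zero, Nat.zero_add, pow_one]
    have h : k = (k - 1) + 1 := (Nat.succ_pred_eq_of_pos hk).symm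
    conv_lhs => rw [h, Nat.factorial_succ, ← h]
  | succ j ih =>
    have hj' : j ≤ k - 1 := le_of_lt (Nat.lt_of_lt_of_le (Nat.lt_succ_self j) hj)
    have ih' := ih hj'
    have hk1 : k - 1 - j = (k - 1 - (j + 1)) + 1 := by omega
    calc Nat.factorial (k + (j + 1)) = (k + j + 1) * Nat.factorial (k + j) := by
          rw [show k + (j+1) = (k+j) + 1 by ring, Nat.factorial_succ]
      _ ≤ (k + j + 1) * (k ^ (2 * j + 1) * Nat.factorial (k - 1 - j)) :=
          Nat.mul_le_mul_left _ ih'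
      _ = (k + j + 1) * (k - 1 - (j + 1) + 1) * (k ^ (2 * j + 1) * Nat.factorial (k - 1 - (j + 1))) := by
          rw [hk1, Nat.factorial_succ]; ring
      _ ≤ k ^ 2 * (k ^ (2 * j + 1) * Nat.factorial (k - 1 - (j + 1))) := by
          apply Nat.mul_le_mul_right
          have h1 : k - 1 - (j + 1) + 1 = k - (j + 1) := by omega
          rw [h1]
          have h2 : j + 1 ≤ k := by omega
          zify [h2]
          nlinarith
      _ = k ^ (2 * (j + 1) + 1) * Nat.factorial (k - 1 - (j + 1)) := by ring

theorem poisson_median_bound (k : ℕ) (hk : 0 < k) :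
    Real.exp (-(k : ℝ)) * ∑ i ∈ Finset.range k, (k : ℝ) ^ i / (Nat.factorial i) ≤ 1 / 2 := by
  set S : ℝ := ∑ i ∈ Finset.range k, (k : ℝ) ^ i / (Nat.factorial i) with hS
  have key : ∀ j ∈ Finset.range k,
      (k : ℝ) ^ (k - 1 - j) / Nat.factorial (k - 1 - j) ≤ (k : ℝ) ^ (k + j) / Nat.factorial (k + j) := by
    intro j hj
    rw [Finset.mem_range] at hj
    have hj' : j ≤ k - 1 := by omega
    have hfb := fact_bound k j hj' hk
    rw [div_le_div_iff₀ (by positivity) (by positivity)]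
    have hpow : (k : ℝ) ^ (k + j) = (k : ℝ) ^ (k - 1 - j) * (k : ℝ) ^ (2 * j + 1) := by
      rw [← pow_add]; congr 1; omega
    rw [hpow]
    have hcast : ((k + j).factorial : ℝ) ≤ (k : ℝ) ^ (2 * j + 1) * ((k - 1 - j).factorial : ℝ) := by
      exact_mod_cast hfb
    calc (k : ℝ) ^ (k - 1 - j) * ((k + j).factorial : ℝ)
        ≤ (k : ℝ) ^ (k - 1 - j) * ((k : ℝ) ^ (2 * j + 1) * ((k - 1 - j).factorial : ℝ)) :=
          mul_le_mul_of_nonneg_left hcast (by positivity)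
      _ = (k : ℝ) ^ (k - 1 - j) * (k : ℝ) ^ (2 * j + 1) * ((k - 1 - j).factorial : ℝ) := by ring
  have hrefl : S = ∑ j ∈ Finset.range k, (k : ℝ) ^ (k - 1 - j) / Nat.factorial (k - 1 - j) := by
    rw [hS, ← Finset.sum_range_reflect]
  have hS2 : S ≤ ∑ j ∈ Finset.range k, (k : ℝ) ^ (k + j) / Nat.factorial (k + j) := by
    rw [hrefl]; exact Finset.sum_le_sum key
  have hsplit : S + ∑ j ∈ Finset.range k, (k : ℝ) ^ (k + j) / Nat.factorial (k + j)
      = ∑ i ∈ Finset.range (k + k), (k : ℝ) ^ i / Nat.factorial i := by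
    rw [Finset.sum_range_add]
  have hexp : ∑ i ∈ Finset.range (k + k), (k : ℝ) ^ i / Nat.factorial i ≤ Real.exp k :=
    Real.sum_le_exp_of_nonneg (by positivity) _
  have h2S : 2 * S ≤ Real.exp k := by
    calc 2 * S = S + S := by ring
      _ ≤ S + ∑ j ∈ Finset.range k, (k : ℝ) ^ (k + j) / Nat.factorial (k + j) := by linarith
      _ = ∑ i ∈ Finset.range (k + k), (k : ℝ) ^ i / Nat.factorial i := hsplit
      _ ≤ Real.exp k := hexp
  rw [Real.exp_neg]
  rw [inv_mul_le_iff₀ (Real.exp_pos _)]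
  linarith
end

section
/- For every positive integer n, a Binomial(n,p) random variable with np = λ satisfies F(k-1; n, p) ≤ e^{-λ} Σ_{i=0}^{k-1} λ^i/i!, i.e., the binomial lower-tail CDF at k-1 is at most the Poisson(λ) lower-tail CDF at k-1, whenever k ≤ λ. -/
/-!
Put `λ = n p`. The probability `P(Bin(m, λ / m) ≤ k - 1)` is nondecreasing in the integer
`m ≥ λ`, and by the Poisson limit theorem it tends to `P(Poisson(λ) ≤ k - 1)` as `m → ∞`.

For the step from `m` to `m + 1`, move mass `s` from `Bin(m, λ / m)` to one extra Bernoulli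
coin: `Bin(m, r) + Ber(s)` with `r = (λ - s) / m` keeps the mean `λ` and equals `Bin(m + 1,
λ / (m + 1))` at `s = λ / (m + 1)`. Its CDF at `j = k - 1` has `s`-derivative
`(1 - s / r) (P(Bin(m - 1, r) = j) - P(Bin(m, r) = j))`, which is nonnegative since `s ≤ r`
and `j ≤ m r`.

Binomial probabilities are Bernstein polynomials evaluated at the parameter, so the
differentiation in the parameter is polynomial algebra.
-/

open Polynomial Finset Filter Topology

namespace bernsteinPolynomial

variable {R : Type*} [CommRing R]

theorem succ_zero (n : ℕ) :
    bernsteinPolynomial R (n + 1) 0 = (1 - X) * bernsteinPolynomial R n 0 := by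
  simp [bernsteinPolynomial, pow_succ, mul_comm]

theorem succ_succ (n ν : ℕ) :
    bernsteinPolynomial R (n + 1) (ν + 1) =
      (1 - X) * bernsteinPolynomial R n (ν + 1) + X * bernsteinPolynomial R n ν := by
  rcases lt_trichotomy ν n with h | rfl | h
  · obtain ⟨d, rfl⟩ := Nat.exists_eq_add_of_lt h
    simp only [bernsteinPolynomial, Nat.choose_succ_succ',
      show ν + d + 1 + 1 - (ν + 1) = d + 1 by omega, show ν + d + 1 - (ν + 1) = d by omega,
      show ν + d + 1 - ν = d + 1 by omega]
    push_cast
    ring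
  · simp [bernsteinPolynomial, Nat.choose_succ_self, pow_succ, mul_comm]
  · simp [eq_zero_of_lt, h, Nat.lt_succ_of_lt h]

theorem X_mul_derivative (n ν : ℕ) :
    X * derivative (bernsteinPolynomial R n ν) =
      (n : R[X]) * (bernsteinPolynomial R n ν - bernsteinPolynomial R (n - 1) ν) := by
  rcases n with _ | n
  · rcases ν with _ | ν <;> simp [bernsteinPolynomial]
  rcases ν with _ | ν
  · rw [derivative_zero, succ_zero]; simp only [Nat.add_sub_cancel]; ring
  · rw [derivative_succ, succ_succ]; simp only [Nat.add_sub_cancel]; ring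

theorem derivative_sum_range (n k : ℕ) :
    derivative (∑ i ∈ range (k + 1), bernsteinPolynomial R n i) =
      -n * bernsteinPolynomial R (n - 1) k := by
  induction k with
  | zero => simp [derivative_zero]
  | succ k ih => rw [sum_range_succ, derivative_add, ih, derivative_succ]; ring

theorem sum_range_degree_succ (n k : ℕ) :
    ∑ i ∈ range (k + 1), bernsteinPolynomial R (n + 1) i =
      ∑ i ∈ range (k + 1), bernsteinPolynomial R n i - X * bernsteinPolynomial R n k := by
  induction k with
  | zero => simp [succ_zero]; ring
  | succ k ih => rw [sum_range_succ, ih, succ_succ, sum_range_succ (n := k + 1)]; ring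

end bernsteinPolynomial

theorem bernsteinPolynomial.eval_degree_succ_le {m j : ℕ} {r : ℝ} (hj : j ≤ m) (hr : r ≤ 1)
    (h : j ≤ (m + 1) * r) :
    (bernsteinPolynomial ℝ (m + 1) j).eval r ≤ (bernsteinPolynomial ℝ m j).eval r := by
  obtain ⟨d, rfl⟩ := Nat.exists_eq_add_of_le hj
  have hr0 : 0 ≤ r := by
    by_contra! hneg
    nlinarith [(Nat.cast_nonneg j : (0 : ℝ) ≤ j)]
  have hchoose : ((j + d + 1).choose j : ℝ) * (d + 1) = (j + d).choose j * (j + d + 1) := by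
    have := Nat.choose_mul_succ_eq (j + d) j
    rw [show j + d + 1 - j = d + 1 by omega] at this
    exact_mod_cast this.symm
  have hratio : ((j + d + 1).choose j : ℝ) * (1 - r) ≤ (j + d).choose j := by
    refine le_of_mul_le_mul_left ?_ (by positivity : (0 : ℝ) < d + 1)
    calc ((d : ℝ) + 1) * ((j + d + 1).choose j * (1 - r))
        = (j + d).choose j * ((j + d + 1) * (1 - r)) := by linear_combination (1 - r) * hchoose
      _ ≤ (j + d).choose j * (d + 1) := by
          gcongr
          push_cast at h
          linarith
      _ = (d + 1) * (j + d).choose j := mul_comm _ _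
  simp only [bernsteinPolynomial, eval_mul, eval_natCast, eval_pow, eval_X, eval_sub, eval_one,
    show j + d + 1 - j = d + 1 by omega, Nat.add_sub_cancel_left]
  calc ((j + d + 1).choose j : ℝ) * r ^ j * (1 - r) ^ (d + 1)
      = r ^ j * (1 - r) ^ d * ((j + d + 1).choose j * (1 - r)) := by ring
    _ ≤ r ^ j * (1 - r) ^ d * (j + d).choose j := by gcongr
    _ = (j + d).choose j * r ^ j * (1 - r) ^ d := by ring

/-- The CDF at `j` of `Bin(m, (l - s) / m) + Ber(s)`, a sum of `m + 1` independent Bernoulli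
variables of total mean `l`. -/
noncomputable def binomialBernoulliCDF (m j : ℕ) (l s : ℝ) : ℝ :=
  (∑ i ∈ range (j + 1), bernsteinPolynomial ℝ m i).eval ((l - s) / m) -
    s * (bernsteinPolynomial ℝ m j).eval ((l - s) / m)

theorem hasDerivAt_binomialBernoulliCDF {m : ℕ} (hm : m ≠ 0) (j : ℕ) (l s : ℝ) :
    HasDerivAt (binomialBernoulliCDF m j l)
      ((bernsteinPolynomial ℝ (m - 1) j).eval ((l - s) / m) -
        (bernsteinPolynomial ℝ m j).eval ((l - s) / m) +
        s * (derivative (bernsteinPolynomial ℝ m j)).eval ((l - s) / m) / m) s := by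
  have hr : HasDerivAt (fun s : ℝ => (l - s) / m) (-1 / m) s := by
    simpa [div_eq_mul_inv] using ((hasDerivAt_id s).const_sub l).mul_const (m : ℝ)⁻¹
  have hT := ((∑ i ∈ range (j + 1), bernsteinPolynomial ℝ m i).hasDerivAt _).comp s hr
  have hB := ((bernsteinPolynomial ℝ m j).hasDerivAt _).comp s hr
  refine (hT.sub ((hasDerivAt_id s).mul hB)).congr_deriv ?_
  simp only [bernsteinPolynomial.derivative_sum_range, eval_mul, eval_neg, eval_natCast, id,
    Function.comp]
  field_simp
  ring

theorem monotoneOn_binomialBernoulliCDF {m j : ℕ} {l : ℝ} (hj : (j : ℝ) + 1 ≤ l)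
    (hl : l ≤ m) : MonotoneOn (binomialBernoulliCDF m j l) (Set.Icc 0 (l / (m + 1))) := by
  have hjm : j + 1 ≤ m := by exact_mod_cast hj.trans hl
  have hl0 : 0 < l := by linarith [(Nat.cast_nonneg j : (0 : ℝ) ≤ j)]
  have hm : (0 : ℝ) < m := hl0.trans_le hl
  refine monotoneOn_of_hasDerivWithinAt_nonneg (convex_Icc _ _)
    (HasDerivAt.continuousOn fun s _ => hasDerivAt_binomialBernoulliCDF (by omega) j l s)
    (fun s _ => (hasDerivAt_binomialBernoulliCDF (by omega) j l s).hasDerivWithinAt) ?_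
  intro s hs
  rw [interior_Icc] at hs
  obtain ⟨hs0, hsq⟩ := hs
  generalize hr : (l - s) / m = r
  have hqr : l / (m + 1) ≤ r := by
    rw [← hr, div_le_div_iff₀ (by positivity) hm]
    nlinarith [(lt_div_iff₀ (by positivity)).1 hsq]
  have hr1 : r ≤ 1 := by rw [← hr, div_le_one hm]; linarith
  have hjr : (j : ℝ) ≤ ((m - 1 : ℕ) + 1) * r := by
    have hq1 : l / (m + 1) ≤ 1 := by rw [div_le_one (by positivity)]; linarith
    have hqm : m * (l / (m + 1)) = l - l / (m + 1) := by field_simp; ring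
    rw [Nat.cast_sub (by omega), Nat.cast_one, sub_add_cancel]
    nlinarith [mul_le_mul_of_nonneg_left hqr hm.le]
  have hB : (bernsteinPolynomial ℝ m j).eval r ≤ (bernsteinPolynomial ℝ (m - 1) j).eval r := by
    simpa [Nat.sub_add_cancel (by omega : 1 ≤ m)] using
      bernsteinPolynomial.eval_degree_succ_le (by omega) hr1 hjr
  have hX : r * (derivative (bernsteinPolynomial ℝ m j)).eval r / m =
      (bernsteinPolynomial ℝ m j).eval r - (bernsteinPolynomial ℝ (m - 1) j).eval r := by
    have := congrArg (eval r) (bernsteinPolynomial.X_mul_derivative (R := ℝ) m j)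
    simp only [eval_mul, eval_X, eval_natCast, eval_sub] at this
    rw [this]
    field_simp
  refine nonneg_of_mul_nonneg_right ?_ (hs0.trans (hsq.trans_le hqr))
  calc 0 ≤ (r - s) *
        ((bernsteinPolynomial ℝ (m - 1) j).eval r - (bernsteinPolynomial ℝ m j).eval r) :=
        mul_nonneg (by linarith) (by linarith)
    _ = _ := by linear_combination -s * hX

theorem sum_range_bernsteinPolynomial_eval_div_le_succ {k m : ℕ} {l : ℝ} (hk : (k : ℝ) ≤ l)
    (hl : l ≤ m) :
    (∑ i ∈ range k, bernsteinPolynomial ℝ m i).eval (l / m) ≤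
      (∑ i ∈ range k, bernsteinPolynomial ℝ (m + 1) i).eval (l / (m + 1 : ℕ)) := by
  rcases k with _ | j
  · simp
  push_cast at hk ⊢
  have hl0 : 0 < l := by linarith [(Nat.cast_nonneg j : (0 : ℝ) ≤ j)]
  have hm : (m : ℝ) ≠ 0 := by linarith
  have hq : 0 ≤ l / (m + 1) := by positivity
  have hstart : binomialBernoulliCDF m j l 0 =
      (∑ i ∈ range (j + 1), bernsteinPolynomial ℝ m i).eval (l / m) := by
    simp [binomialBernoulliCDF]
  have hend : binomialBernoulliCDF m j l (l / (m + 1)) =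
      (∑ i ∈ range (j + 1), bernsteinPolynomial ℝ (m + 1) i).eval (l / (m + 1)) := by
    have hr : (l - l / (m + 1)) / m = l / (m + 1) := by field_simp; ring
    simp [binomialBernoulliCDF, hr, bernsteinPolynomial.sum_range_degree_succ]
  rw [← hstart, ← hend]
  exact monotoneOn_binomialBernoulliCDF hk hl ⟨le_rfl, hq⟩ ⟨hq, le_rfl⟩ hq

theorem tendsto_sum_range_bernsteinPolynomial_eval_div (k : ℕ) (l : ℝ) :
    Tendsto (fun m : ℕ => (∑ i ∈ range k, bernsteinPolynomial ℝ m i).eval (l / m)) atTop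
      (𝓝 (Real.exp (-l) * ∑ i ∈ range k, l ^ i / i.factorial)) := by
  have hl : Tendsto (fun m : ℕ => m * (l / m)) atTop (𝓝 l) := by
    refine tendsto_const_nhds.congr' ?_
    filter_upwards [eventually_ne_atTop 0] with m hm
    field_simp
  simp only [eval_finsetSum, mul_sum, ← mul_div_assoc]
  refine tendsto_finsetSum _ fun i _ => ?_
  simpa [bernsteinPolynomial] using
    ProbabilityTheory.tendsto_choose_mul_pow_of_tendsto_mul_atTop i hl

theorem binomial_tail_le_poisson_tail_general
    (n : ℕ) (hn : 0 < n) (p : ℝ) (hp : p ∈ Set.Icc (0:ℝ) 1)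
    (k : ℕ) (hkl : (k : ℝ) ≤ n * p) :
    ∑ i ∈ Finset.range k, (n.choose i : ℝ) * p ^ i * (1 - p) ^ (n - i) ≤
      Real.exp (-(n * p)) * ∑ i ∈ Finset.range k, (n * p) ^ i / (Nat.factorial i) := by
  have hmono : MonotoneOn
      (fun m : ℕ => (∑ i ∈ range k, bernsteinPolynomial ℝ m i).eval (n * p / m)) {m | n ≤ m} :=
    monotoneOn_nat_Ici_of_le_succ fun m hm =>
      sum_range_bernsteinPolynomial_eval_div_le_succ hkl
        (by nlinarith [hp.2, (Nat.cast_le (α := ℝ)).2 hm])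
  have hnp : n * p / n = p := by field_simp
  refine ge_of_tendsto (tendsto_sum_range_bernsteinPolynomial_eval_div k (n * p))
    (eventually_atTop.2 ⟨n, fun m hm => ?_⟩)
  simpa [hnp, eval_finsetSum, bernsteinPolynomial] using hmono (show n ≤ n from le_rfl) hm hm

theorem binomial_tail_le_poisson_tail
    (n : ℕ) (hn : 0 < n) (p : ℝ) (hp : p ∈ Set.Icc (0:ℝ) 1)
    (k : ℕ) (hk : 0 < k) (hkl : (k : ℝ) ≤ n * p) :
    ∑ i ∈ Finset.range k, (n.choose i : ℝ) * p ^ i * (1 - p) ^ (n - i) ≤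
      Real.exp (-(n * p)) * ∑ i ∈ Finset.range k, (n * p) ^ i / (Nat.factorial i) :=
  binomial_tail_le_poisson_tail_general n hn p hp k hkl
end

section
/- For β > 1 and any nonnegative sequence (a_t)_{t≥1} with Σ_t a_t = 1, we have Σ_{t=1}^∞ exp(-β Σ_{t'≤t} a_{t'} ln(t/t')) ≤ (β/(β-1)) · Σ_{t=1}^∞ t·a_t. -/
/-! Write `T = ∑ t a_t`. Dropping the terms `t' > t`, where `log (t / t') ≤ 0`, and applying
Jensen's inequality to the concave logarithm bounds the exponent below by `log t - log T`; it is
also nonnegative, so the `t`-th summand is at most `(T / max t T) ^ β`. This majorant is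
antitone, hence its sum over `t ≥ 1` is at most
`∫₀^∞ (T / max x T) ^ β dx = T + T / (β - 1)`. -/

open Finset Real

theorem tsum_pnat_eq_sum_Icc {f : ℕ → ℝ} {N : ℕ} (hf : ∀ t, N < t → f t = 0) :
    ∑' t : ℕ+, f t = ∑ t ∈ Icc 1 N, f t := by
  rw [tsum_pnat_eq_tsum_succ, tsum_eq_sum (s := range N) fun n hn ↦ hf _ (by simpa using hn),
    range_eq_Ico, sum_Ico_add' f 0 N 1, Ico_add_one_right_eq_Icc, zero_add]

theorem sum_mul_log_le_log_sum_mul {s : Finset ℕ} {a : ℕ → ℝ} (hnn : ∀ t, 0 ≤ a t)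
    (hsum : ∑ t ∈ s, a t = 1) (hs : ∀ t ∈ s, 0 < t) :
    ∑ t ∈ s, a t * log t ≤ log (∑ t ∈ s, t * a t) := by
  have := strictConcaveOn_log_Ioi.concaveOn.le_map_sum (fun t _ ↦ hnn t) hsum
    (p := fun t : ℕ ↦ (t : ℝ)) fun t ht ↦ by simpa using hs t ht
  simpa [mul_comm] using this

theorem sum_mul_log_div_nonneg {a : ℕ → ℝ} (hnn : ∀ t, 0 ≤ a t) (n : ℕ) :
    0 ≤ ∑ t ∈ Icc 1 n, a t * log (n / t) := by
  refine sum_nonneg fun t ht ↦ mul_nonneg (hnn t) (log_nonneg ?_)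
  obtain ⟨ht₁, htn⟩ := mem_Icc.1 ht
  exact (one_le_div (by positivity)).2 (by exact_mod_cast htn)

theorem log_sub_log_le_sum_mul_log_div {a : ℕ → ℝ} {n M : ℕ} (hnn : ∀ t, 0 ≤ a t)
    (hn : 0 < n) (hnM : n ≤ M) (hsum : ∑ t ∈ Icc 1 M, a t = 1) :
    log n - log (∑ t ∈ Icc 1 M, t * a t) ≤ ∑ t ∈ Icc 1 n, a t * log (n / t) := by
  have htail : ∑ t ∈ Ioc n M, a t * log (n / t) ≤ 0 := by
    refine sum_nonpos fun t ht ↦ mul_nonpos_of_nonneg_of_nonpos (hnn t) ?_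
    have hnt : (n : ℝ) < t := by exact_mod_cast (mem_Ioc.1 ht).1
    exact log_nonpos (by positivity) ((div_le_one (n.cast_nonneg.trans_lt hnt)).2 hnt.le)
  have hsplit : ∑ t ∈ Icc 1 M, a t * log (n / t) =
      ∑ t ∈ Icc 1 n, a t * log (n / t) + ∑ t ∈ Ioc n M, a t * log (n / t) := by
    rw [← zero_add 1, Icc_add_one_left_eq_Ioc, Icc_add_one_left_eq_Ioc,
      sum_Ioc_consecutive _ (Nat.zero_le n) hnM]
  have hexpand : ∑ t ∈ Icc 1 M, a t * log (n / t) = log n - ∑ t ∈ Icc 1 M, a t * log t := by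
    rw [← mul_one (log n), ← hsum, mul_sum, ← sum_sub_distrib]
    refine sum_congr rfl fun t ht ↦ ?_
    have ht : (t : ℝ) ≠ 0 := by have := (mem_Icc.1 ht).1; positivity
    rw [log_div (by positivity) ht]
    ring
  have := sum_mul_log_le_log_sum_mul hnn hsum fun t ht ↦ (mem_Icc.1 ht).1
  linarith

theorem exp_neg_mul_le_rpow_div_max {β E T x : ℝ} (hβ : 0 ≤ β) (hT : 0 < T)
    (hE₀ : 0 ≤ E) (hE : log x - log T ≤ E) : exp (-β * E) ≤ (T / max x T) ^ β := by
  rw [rpow_def_of_pos (div_pos hT (lt_max_of_lt_right hT)), exp_le_exp,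
    log_div hT.ne' (lt_max_of_lt_right hT).ne']
  rcases le_total x T with h | h
  · rw [max_eq_right h]; nlinarith
  · rw [max_eq_left h]; nlinarith

theorem antitone_rpow_div_max {β T : ℝ} (hβ : 0 ≤ β) (hT : 0 < T) :
    Antitone fun x : ℝ ↦ (T / max x T) ^ β := fun x y hxy ↦
  rpow_le_rpow (by positivity) (div_le_div_of_nonneg_left hT.le (by positivity)
    (max_le_max_right T hxy)) hβ

theorem continuous_rpow_div_max {β T : ℝ} (hT : 0 < T) :
    Continuous fun x : ℝ ↦ (T / max x T) ^ β :=
  (continuous_const.div (continuous_id.max continuous_const)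
    fun _ ↦ (lt_max_of_lt_right hT).ne').rpow_const
    fun _ ↦ Or.inl (div_pos hT (lt_max_of_lt_right hT)).ne'

theorem integral_rpow_div_max_le {β T b : ℝ} (hβ : 1 < β) (hT : 0 < T) (hb : 0 ≤ b) :
    ∫ x in 0..b, (T / max x T) ^ β ≤ β / (β - 1) * T := by
  set g : ℝ → ℝ := fun x ↦ (T / max x T) ^ β
  have hg : ∀ u v, IntervalIntegrable g MeasureTheory.volume u v := fun u v ↦
    (continuous_rpow_div_max hT).intervalIntegrable u v
  set B := max b T
  have hmono : ∫ x in 0..b, g x ≤ ∫ x in 0..B, g x :=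
    intervalIntegral.integral_mono_interval le_rfl hb (le_max_left b T)
      (Filter.Eventually.of_forall fun x ↦ by positivity) (hg 0 B)
  have hhead : ∫ x in 0..T, g x = T := by
    rw [intervalIntegral.integral_congr (g := fun _ ↦ 1), intervalIntegral.integral_const]
    · simp
    intro x hx
    rw [Set.uIcc_of_le hT.le] at hx
    simp [g, max_eq_right hx.2, div_self hT.ne']
  have htail : ∫ x in T..B, g x = T ^ β * ((B ^ (1 - β) - T ^ (1 - β)) / (1 - β)) := by
    rw [intervalIntegral.integral_congr (g := fun x ↦ T ^ β * x ^ (-β)),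
      intervalIntegral.integral_const_mul, integral_rpow]
    · rw [neg_add_eq_sub]
    · refine Or.inr ⟨by linarith, ?_⟩
      rw [Set.uIcc_of_le (le_max_right b T)]
      exact fun h ↦ hT.not_ge h.1
    · intro x hx
      rw [Set.uIcc_of_le (le_max_right b T)] at hx
      have hx0 : 0 < x := hT.trans_le hx.1
      simp only [g, max_eq_left hx.1]
      rw [div_rpow hT.le hx0.le, rpow_neg hx0.le, div_eq_mul_inv]
  have hBT : T ^ β * ((B ^ (1 - β) - T ^ (1 - β)) / (1 - β)) ≤ T / (β - 1) := by
    have hTT : T ^ β * T ^ (1 - β) = T := by rw [← rpow_add hT]; simp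
    have hB : 0 ≤ T ^ β * B ^ (1 - β) := by
      have := hT.le.trans (le_max_right b T); positivity
    calc T ^ β * ((B ^ (1 - β) - T ^ (1 - β)) / (1 - β))
        = (T ^ β * T ^ (1 - β) - T ^ β * B ^ (1 - β)) / (β - 1) := by
          rw [← neg_sub β 1, div_neg, ← neg_div]; ring
      _ ≤ T / (β - 1) := by rw [hTT]; gcongr; linarith
  rw [← intervalIntegral.integral_add_adjacent_intervals (hg 0 T) (hg T B), hhead, htail] at hmono
  calc ∫ x in 0..b, g x ≤ T + T / (β - 1) := by linarith
    _ = β / (β - 1) * T := by field_simp [(by linarith : β - 1 ≠ 0)]; ring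

theorem sum_range_rpow_div_max_le {β T : ℝ} (hβ : 1 < β) (hT : 0 < T) (n : ℕ) :
    ∑ i ∈ range n, (T / max ((i + 1 : ℕ) : ℝ) T) ^ β ≤ β / (β - 1) * T := by
  have := ((antitone_rpow_div_max (zero_le_one.trans hβ.le) hT).antitoneOn
    (Set.Icc 0 (0 + n))).sum_le_integral
  simp only [zero_add] at this
  exact this.trans (integral_rpow_div_max_le hβ hT n.cast_nonneg)

theorem mssc_kernel_ratio_bound
    (β : ℝ) (hβ : 1 < β) (a : ℕ → ℝ)
    (hnn : ∀ t, 0 ≤ a t)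
    (hfin : (Function.support a).Finite)
    (hsum : ∑' t : ℕ+, a (t : ℕ) = 1) :
    ∑' t : ℕ+, Real.exp (-β * ∑ t' ∈ Finset.Icc 1 (t : ℕ),
        a t' * Real.log ((t : ℝ) / (t' : ℝ))) ≤
      (β / (β - 1)) * ∑' t : ℕ+, (t : ℝ) * a (t : ℕ) := by
  obtain ⟨N, hN⟩ : ∃ N, ∀ t, N < t → a t = 0 := by
    obtain ⟨N, hN⟩ := hfin.bddAbove
    exact ⟨N, fun t ht ↦ Function.notMem_support.1 fun h ↦ (hN h).not_gt ht⟩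
  set T := ∑' t : ℕ+, (t : ℝ) * a t
  have hmass : ∀ M, N ≤ M → ∑ t ∈ Icc 1 M, a t = 1 := fun M hM ↦
    hsum ▸ (tsum_pnat_eq_sum_Icc fun t ht ↦ hN t (hM.trans_lt ht)).symm
  have hmean : ∀ M, N ≤ M → ∑ t ∈ Icc 1 M, (t : ℝ) * a t = T := fun M hM ↦
    (tsum_pnat_eq_sum_Icc fun t ht ↦ by rw [hN t (hM.trans_lt ht), mul_zero]).symm
  have hT : 0 < T := by
    rw [← hmean N le_rfl]
    refine lt_of_lt_of_le one_pos (hmass N le_rfl ▸ sum_le_sum fun t ht ↦ ?_)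
    exact le_mul_of_one_le_left (hnn t) (by exact_mod_cast (mem_Icc.1 ht).1)
  have hterm : ∀ n : ℕ, 0 < n →
      exp (-β * ∑ t ∈ Icc 1 n, a t * log (n / t)) ≤ (T / max (n : ℝ) T) ^ β := by
    intro n hn
    refine exp_neg_mul_le_rpow_div_max (by linarith) hT (sum_mul_log_div_nonneg hnn n) ?_
    rw [← hmean _ (le_max_right n N)]
    exact log_sub_log_le_sum_mul_log_div hnn hn (le_max_left n N) (hmass _ (le_max_right n N))
  refine (tsum_pnat_eq_tsum_succ
    (f := fun n : ℕ ↦ exp (-β * ∑ t ∈ Icc 1 n, a t * log (n / t)))).trans_le ?_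
  refine Real.tsum_le_of_sum_range_le (fun _ ↦ (exp_pos _).le) fun n ↦ ?_
  exact (sum_le_sum fun i _ ↦ hterm (i + 1) i.succ_pos).trans (sum_range_rpow_div_max_le hβ hT n)
end

section
/- For every positive integer u, u + Σ_{t>u} (u(u+1)/(t(t+1)))² ≤ (4/3)·u. -/
/-! Since `3 t (t + 1) ≤ (t + 1) ^ 3 - t ^ 3`, each summand is at most
`(u (u + 1)) ^ 2 / 3 * (1 / t ^ 3 - 1 / (t + 1) ^ 3)`, and these bounds telescope to
`(u (u + 1)) ^ 2 / (3 (u + 1) ^ 3) = u ^ 2 / (3 (u + 1)) ≤ u / 3`. -/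

open Finset

lemma three_div_sq_le_inv_pow_three_sub {t : ℝ} (ht : 0 < t) :
    3 / (t * (t + 1)) ^ 2 ≤ 1 / t ^ 3 - 1 / (t + 1) ^ 3 := by
  rw [div_sub_div _ _ (by positivity) (by positivity), div_le_div_iff₀ (by positivity) (by positivity)]
  nlinarith [pow_pos ht 3, pow_pos ht 4]

lemma sum_range_div_sq_le (c : ℝ) {x : ℝ} (hx : 0 < x) (N : ℕ) :
    ∑ n ∈ range N, (c / ((x + n) * (x + n + 1))) ^ 2 ≤ c ^ 2 / (3 * x ^ 3) := by
  calc ∑ n ∈ range N, (c / ((x + n) * (x + n + 1))) ^ 2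
      ≤ ∑ n ∈ range N, c ^ 2 / 3 * (1 / (x + n) ^ 3 - 1 / (x + ↑(n + 1)) ^ 3) := by
        refine sum_le_sum fun n _ => ?_
        have hxn : 0 < x + n := by positivity
        calc (c / ((x + n) * (x + n + 1))) ^ 2 = c ^ 2 / 3 * (3 / ((x + n) * (x + n + 1)) ^ 2) := by
              rw [div_pow]; ring
          _ ≤ _ := by
              push_cast
              rw [← add_assoc]
              gcongr
              exact three_div_sq_le_inv_pow_three_sub hxn
    _ = c ^ 2 / 3 * (1 / x ^ 3 - 1 / (x + N) ^ 3) := by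
        rw [← mul_sum, sum_range_sub' (fun n : ℕ => 1 / (x + n) ^ 3)]
        simp
    _ ≤ c ^ 2 / 3 * (1 / x ^ 3) := by
        gcongr
        exact sub_le_self _ (by positivity)
    _ = c ^ 2 / (3 * x ^ 3) := by ring

lemma tsum_div_sq_le (c : ℝ) {x : ℝ} (hx : 0 < x) :
    ∑' n : ℕ, (c / ((x + n) * (x + n + 1))) ^ 2 ≤ c ^ 2 / (3 * x ^ 3) :=
  Real.tsum_le_of_sum_range_le (fun _ => sq_nonneg _) (sum_range_div_sq_le c hx)

lemma tsum_subtype_nat_lt {α : Type*} [AddCommMonoid α] [TopologicalSpace α] (f : ℕ → α) (u : ℕ) :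
    ∑' t : {t : ℕ // u < t}, f t = ∑' n : ℕ, f (u + 1 + n) := by
  let shift : ℕ → {t : ℕ // u < t} := fun n => ⟨u + 1 + n, by omega⟩
  have shift_injective : shift.Injective := fun m n h => by
    simpa [shift] using congrArg Subtype.val h
  exact (shift_injective.tsum_eq fun t _ =>
    ⟨(t : ℕ) - (u + 1), Subtype.ext (by simp [shift]; omega)⟩).symm

theorem msvc_extreme_point_bound_general (u : ℕ) :
    (u : ℝ) + ∑' t : {t : ℕ // u < t},
        (((u : ℝ) * ((u : ℝ) + 1)) / (((t : ℕ) : ℝ) * (((t : ℕ) : ℝ) + 1))) ^ 2 ≤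
      (4 / 3) * (u : ℝ) := by
  set c : ℝ := u * (u + 1)
  have hu1 : (0 : ℝ) < u + 1 := by positivity
  have tail_le : c ^ 2 / (3 * ((u : ℝ) + 1) ^ 3) ≤ u / 3 := by
    rw [div_le_div_iff₀ (by positivity) (by norm_num)]
    nlinarith [Nat.cast_nonneg (α := ℝ) u, pow_pos hu1 3]
  rw [tsum_subtype_nat_lt (fun t : ℕ => (c / ((t : ℝ) * ((t : ℝ) + 1))) ^ 2) u]
  push_cast
  linarith [tsum_div_sq_le c hu1]

theorem msvc_extreme_point_bound (u : ℕ) (hu : 0 < u) :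
    (u : ℝ) + ∑' t : {t : ℕ // u < t},
        (((u : ℝ) * ((u : ℝ) + 1)) / (((t : ℕ) : ℝ) * (((t : ℕ) : ℝ) + 1))) ^ 2 ≤
      (4 / 3) * (u : ℝ) :=
  msvc_extreme_point_bound_general u
end

section
/- For any nonnegative sequence (a_t)_{t≥1} with Σ_t a_t = 1 and finite support, Σ_{t=1}^∞ (1 − Σ_{t'<t} (1 − t'(t'+1)/(t(t+1))) a_{t'})² ≤ (4/3) · Σ_{t=1}^∞ t·a_t, where equivalently the right side equals (4/3)·Σ_t (1 − Σ_{t'<t} a_{t'}). -/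
/-!
With `f t = t (t + 1)` and `∑ a = 1`, the `t`-th base of the left side is the average
`S t = ∑ u, a u * w u t` of the weights `w u t = min (f u) (f t) / f t ∈ [0, 1]`.
By Jensen `S t ^ 2 ≤ ∑ u, a u * w u t ^ 2`, so it suffices that `∑ t, w u t ^ 2 ≤ 4 u / 3`
for every `u ≥ 1`. The `u` terms with `t ≤ u` equal `1`, and the tail `f u ^ 2 * ∑_{t > u} f t⁻²`
telescopes against `g s = 1 / (3 s (s + 1)²)`, since `f t⁻² ≤ g (t - 1) - g t`; it is at most
`f u ^ 2 * g u = u / 3`.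
-/

open Finset

noncomputable def pronic (t : ℕ) : ℝ := t * (t + 1)

lemma pronic_pos {t : ℕ} (ht : 1 ≤ t) : 0 < pronic t := by
  unfold pronic; positivity

lemma pronic_mono : Monotone pronic := fun s t h => by
  have : (s : ℝ) ≤ t := by exact_mod_cast h
  unfold pronic; gcongr

noncomputable def pronicWeight (u t : ℕ) : ℝ := min (pronic u) (pronic t) / pronic t

lemma pronicWeight_of_le {u t : ℕ} (ht : 1 ≤ t) (h : t ≤ u) : pronicWeight u t = 1 := by
  rw [pronicWeight, min_eq_right (pronic_mono h), div_self (pronic_pos ht).ne']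

lemma pronicWeight_of_ge {u t : ℕ} (h : u ≤ t) : pronicWeight u t = pronic u / pronic t := by
  rw [pronicWeight, min_eq_left (pronic_mono h)]

-- A telescoping majorant of `∑_{s ≥ t} pronicWeight u s ^ 2`.
noncomputable def pronicWeightSqTail (u t : ℕ) : ℝ :=
  if t ≤ u then (u + 1 - t : ℝ) + u / 3 else pronic u ^ 2 / (3 * (t - 1 : ℝ) * (t : ℝ) ^ 2)

lemma pronicWeightSqTail_of_le {u t : ℕ} (h : t ≤ u) :
    pronicWeightSqTail u t = (u + 1 - t : ℝ) + u / 3 := if_pos h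

lemma pronicWeightSqTail_of_lt {u t : ℕ} (h : u < t) :
    pronicWeightSqTail u t = pronic u ^ 2 / (3 * (t - 1 : ℝ) * (t : ℝ) ^ 2) := if_neg h.not_ge

lemma pronicWeightSqTail_nonneg (u t : ℕ) : 0 ≤ pronicWeightSqTail u t := by
  rcases le_or_gt t u with h | h
  · have : (t : ℝ) ≤ u := by exact_mod_cast h
    rw [pronicWeightSqTail_of_le h]
    linarith [u.cast_nonneg (α := ℝ)]
  · have : (1 : ℝ) ≤ t := by exact_mod_cast h.trans_le' u.zero_le
    rw [pronicWeightSqTail_of_lt h]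
    have : (0 : ℝ) ≤ t - 1 := by linarith
    positivity

lemma pronicWeightSqTail_succ_self {u : ℕ} (hu : 1 ≤ u) :
    pronicWeightSqTail u (u + 1) = u / 3 := by
  have : (u : ℝ) ≠ 0 := by positivity
  rw [pronicWeightSqTail_of_lt (lt_add_one u), pronic]
  push_cast
  rw [add_sub_cancel_right]
  field_simp

lemma inv_pronic_sq_le_sub {t : ℕ} (ht : 2 ≤ t) :
    (pronic t ^ 2)⁻¹ ≤ (3 * (t - 1 : ℝ) * t ^ 2)⁻¹ - (3 * t * (t + 1 : ℝ) ^ 2)⁻¹ := by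
  have : (2 : ℝ) ≤ t := by exact_mod_cast ht
  have : (0 : ℝ) < t - 1 := by linarith
  have gap : (3 * (t - 1 : ℝ) * t ^ 2)⁻¹ - (3 * t * (t + 1 : ℝ) ^ 2)⁻¹ - (pronic t ^ 2)⁻¹ =
      4 / (3 * (t - 1) * t ^ 2 * (t + 1) ^ 2) := by
    rw [pronic]
    field_simp
    ring
  rw [← sub_nonneg, gap]
  positivity

lemma sq_pronicWeight_le_sub {u t : ℕ} (hu : 1 ≤ u) (ht : 1 ≤ t) :
    pronicWeight u t ^ 2 ≤ pronicWeightSqTail u t - pronicWeightSqTail u (t + 1) := by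
  rcases lt_trichotomy t u with h | rfl | h
  · rw [pronicWeight_of_le ht h.le, pronicWeightSqTail_of_le h.le, pronicWeightSqTail_of_le h]
    push_cast
    linarith
  · rw [pronicWeight_of_le ht le_rfl, pronicWeightSqTail_of_le le_rfl,
      pronicWeightSqTail_succ_self hu]
    linarith
  · rw [pronicWeight_of_ge h.le, pronicWeightSqTail_of_lt h,
      pronicWeightSqTail_of_lt (h.trans (lt_add_one t)), div_pow]
    push_cast
    rw [add_sub_cancel_right]
    simp only [div_eq_mul_inv, ← mul_sub]
    exact mul_le_mul_of_nonneg_left (inv_pronic_sq_le_sub (by omega)) (sq_nonneg _)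

lemma sum_range_sq_pronicWeight_le {u : ℕ} (hu : 1 ≤ u) (n : ℕ) :
    ∑ i ∈ range n, pronicWeight u (i + 1) ^ 2 ≤ 4 / 3 * u := by
  calc ∑ i ∈ range n, pronicWeight u (i + 1) ^ 2
      ≤ ∑ i ∈ range n, (pronicWeightSqTail u (i + 1) - pronicWeightSqTail u (i + 1 + 1)) :=
        sum_le_sum fun i _ => sq_pronicWeight_le_sub hu (by omega)
    _ = pronicWeightSqTail u 1 - pronicWeightSqTail u (n + 1) := sum_range_sub' _ n
    _ ≤ pronicWeightSqTail u 1 := sub_le_self _ (pronicWeightSqTail_nonneg _ _)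
    _ = 4 / 3 * u := by rw [pronicWeightSqTail_of_le hu]; push_cast; ring

lemma sq_sum_mul_le_sum_mul_sq {ι : Type*} (s : Finset ι) {a : ι → ℝ} (x : ι → ℝ)
    (ha : ∀ i ∈ s, 0 ≤ a i) (ha1 : ∑ i ∈ s, a i = 1) :
    (∑ i ∈ s, a i * x i) ^ 2 ≤ ∑ i ∈ s, a i * x i ^ 2 := by
  simpa [ha1] using sum_sq_le_sum_mul_sum_of_sq_le_mul s ha
    (fun i hi => mul_nonneg (ha i hi) (sq_nonneg (x i))) fun i _ => le_of_eq (by ring)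

lemma tsum_pnat_eq_sum_Icc_s12 {M : Type*} [AddCommMonoid M] [TopologicalSpace M] {g : ℕ → M}
    {N : ℕ} (hg : ∀ m, N < m → g m = 0) :
    ∑' t : ℕ+, g t = ∑ u ∈ Icc 1 N, g u := by
  rw [tsum_pnat_eq_tsum_succ, tsum_eq_sum (s := range N) fun i hi => hg _ (by simpa using hi),
    ← Ico_add_one_right_eq_Icc, ← Nat.Ico_zero_eq_range, sum_Ico_add' g 0 N 1]

lemma one_sub_sum_Ico_eq_sum_mul_pronicWeight {a : ℕ → ℝ} {N t : ℕ}
    (ha : ∀ m, N < m → a m = 0) (ha1 : ∑ u ∈ Icc 1 N, a u = 1) (ht : 1 ≤ t) :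
    1 - ∑ t' ∈ Ico 1 t, (1 - ((t' : ℝ) * ((t' : ℝ) + 1)) / ((t : ℝ) * ((t : ℝ) + 1))) * a t' =
      ∑ u ∈ Icc 1 N, a u * pronicWeight u t := by
  have hIco : ∀ u ∈ Ico 1 t,
      (1 - ((u : ℝ) * ((u : ℝ) + 1)) / ((t : ℝ) * ((t : ℝ) + 1))) * a u =
        (1 - pronicWeight u t) * a u := fun u hu => by
    rw [pronicWeight_of_ge (mem_Ico.1 hu).2.le, pronic, pronic]
  have hIcc : ∑ u ∈ Ico 1 t, (1 - pronicWeight u t) * a u =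
      ∑ u ∈ Icc 1 N, (1 - pronicWeight u t) * a u := by
    calc _ = ∑ u ∈ Icc 1 (N + t), (1 - pronicWeight u t) * a u := by
          refine sum_subset (fun u hu => ?_) fun u hu hu' => ?_
          · simp only [mem_Ico, mem_Icc] at hu ⊢; omega
          · simp only [mem_Ico, mem_Icc, not_and, not_lt] at hu hu'
            rw [pronicWeight_of_le ht (hu' hu.1), sub_self, zero_mul]
      _ = _ := by
          refine (sum_subset (fun u hu => ?_) fun u hu hu' => ?_).symm
          · simp only [mem_Icc] at hu ⊢; omega
          · simp only [mem_Icc, not_and, not_le] at hu hu'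
            rw [ha u (hu' hu.1), mul_zero]
  rw [sum_congr rfl hIco, hIcc]
  simp only [sub_mul, one_mul, sum_sub_distrib, ha1, mul_comm (pronicWeight _ _), sub_sub_cancel]

theorem msvc_main_inequality
    (a : ℕ → ℝ) (hnn : ∀ t, 0 ≤ a t)
    (hfin : (Function.support a).Finite)
    (hsum : ∑' t : ℕ+, a (t : ℕ) = 1) :
    ∑' t : ℕ+, (1 - ∑ t' ∈ Finset.Ico 1 (t : ℕ),
        (1 - ((t' : ℝ) * ((t' : ℝ) + 1)) / ((t : ℝ) * ((t : ℝ) + 1))) * a t') ^ 2 ≤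
      (4 / 3) * ∑' t : ℕ+, (t : ℝ) * a (t : ℕ) := by
  obtain ⟨N, hN⟩ : ∃ N, ∀ m, N < m → a m = 0 := by
    obtain ⟨N, hN⟩ := hfin.bddAbove
    exact ⟨N, fun m hm => by_contra fun h => hm.not_ge (hN h)⟩
  have ha1 : ∑ u ∈ Icc 1 N, a u = 1 := by rwa [tsum_pnat_eq_sum_Icc_s12 hN] at hsum
  rw [tsum_pnat_eq_sum_Icc_s12 (g := fun t => (t : ℝ) * a t) (N := N) fun m hm => by simp [hN m hm],
    ← Equiv.pnatEquivNat.symm.tsum_eq]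
  simp only [Equiv.pnatEquivNat_symm_apply, Nat.succPNat_coe, Nat.succ_eq_add_one]
  refine Real.tsum_le_of_sum_range_le (fun _ => sq_nonneg _) fun n => ?_
  calc _ = ∑ i ∈ range n, (∑ u ∈ Icc 1 N, a u * pronicWeight u (i + 1)) ^ 2 :=
        sum_congr rfl fun i _ => by rw [one_sub_sum_Ico_eq_sum_mul_pronicWeight hN ha1 (by omega)]
    _ ≤ ∑ i ∈ range n, ∑ u ∈ Icc 1 N, a u * pronicWeight u (i + 1) ^ 2 :=
        sum_le_sum fun i _ => sq_sum_mul_le_sum_mul_sq _ _ (fun u _ => hnn u) ha1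
    _ = ∑ u ∈ Icc 1 N, a u * ∑ i ∈ range n, pronicWeight u (i + 1) ^ 2 := by
        rw [sum_comm]; simp_rw [mul_sum]
    _ ≤ ∑ u ∈ Icc 1 N, a u * (4 / 3 * u) := sum_le_sum fun u hu =>
        mul_le_mul_of_nonneg_left (sum_range_sq_pronicWeight_le (mem_Icc.1 hu).1 n) (hnn u)
    _ = 4 / 3 * ∑ u ∈ Icc 1 N, (u : ℝ) * a u := by
        rw [mul_sum]; exact sum_congr rfl fun _ _ => by ring
end

section
/- For any p ≥ 1 and positive integer u, u^p + Σ_{t>u} (t^p − (t−1)^p)·(u/t)^{p+1} ≤ (p+1)·u^p. -/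
/-!
By Bernoulli's inequality `t ^ p - (t - 1) ^ p ≤ p * t ^ (p - 1)`, so the `t`-th summand is at most
`p * u ^ (p + 1) / t ^ 2 ≤ p * u ^ (p + 1) * (1 / (t - 1) - 1 / t)`. These bounds telescope, so
every partial sum, hence the whole series, is at most `p * u ^ (p + 1) / u = p * u ^ p`.
-/

open Finset

lemma sum_Ioc_inv_sub_one_sub_inv {u N : ℕ} (huN : u ≤ N) :
    ∑ t ∈ Ioc u N, (((t : ℝ) - 1)⁻¹ - (t : ℝ)⁻¹) = (u : ℝ)⁻¹ - (N : ℝ)⁻¹ := by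
  induction N, huN using Nat.le_induction with
  | base => simp
  | succ N _ ih =>
    rw [sum_Ioc_succ_top (by omega), ih]
    push_cast
    ring

lemma sum_Ioc_inv_sub_one_sub_inv_le (u N : ℕ) :
    ∑ t ∈ Ioc u N, (((t : ℝ) - 1)⁻¹ - (t : ℝ)⁻¹) ≤ (u : ℝ)⁻¹ := by
  rcases le_or_gt u N with huN | hNu
  · rw [sum_Ioc_inv_sub_one_sub_inv huN, sub_le_self_iff]
    positivity
  · rw [Ioc_eq_empty_of_le hNu.le, sum_empty]
    positivity

lemma tsum_subtype_lt_le_of_sum_Ioc_le {f : ℕ → ℝ} {u : ℕ} {C : ℝ}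
    (hf : ∀ t, u < t → 0 ≤ f t) (h : ∀ N, ∑ t ∈ Ioc u N, f t ≤ C) :
    ∑' t : {t : ℕ // u < t}, f t ≤ C := by
  refine Real.tsum_le_of_sum_le (fun t ↦ hf t t.2) fun s ↦ ?_
  calc ∑ t ∈ s, f t = ∑ t ∈ s.map (Function.Embedding.subtype _), f t :=
        (sum_map s (Function.Embedding.subtype _) f).symm
    _ ≤ ∑ t ∈ Ioc u (s.sup (↑)), f t := by
      refine sum_le_sum_of_subset_of_nonneg ?_ fun t ht _ ↦ hf t (mem_Ioc.1 ht).1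
      simp only [subset_iff, mem_map, Function.Embedding.subtype_apply, mem_Ioc]
      rintro _ ⟨t, ht, rfl⟩
      exact ⟨t.2, le_sup (f := ((↑) : {t : ℕ // u < t} → ℕ)) ht⟩
    _ ≤ C := h _

lemma rpow_sub_rpow_sub_one_le {p x : ℝ} (hp : 1 ≤ p) (hx : 1 ≤ x) :
    x ^ p - (x - 1) ^ p ≤ p * x ^ (p - 1) := by
  have hx0 : 0 < x := by linarith
  have bernoulli : 1 + p * -x⁻¹ ≤ (1 + -x⁻¹) ^ p :=
    one_add_mul_self_le_rpow_one_add (by linarith [inv_le_one_of_one_le₀ hx]) hp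
  have hsplit : (x - 1) ^ p = x ^ p * (1 + -x⁻¹) ^ p := by
    rw [← Real.mul_rpow hx0.le (by linarith [inv_le_one_of_one_le₀ hx])]
    congr 1
    field_simp
    ring
  rw [hsplit, Real.rpow_sub_one hx0.ne', div_eq_mul_inv]
  nlinarith [mul_le_mul_of_nonneg_left bernoulli (Real.rpow_nonneg hx0.le p)]

lemma rpow_sub_rpow_sub_one_mul_div_rpow_le {p u x : ℝ} (hp : 1 ≤ p) (hu : 0 ≤ u) (hx : 1 < x) :
    (x ^ p - (x - 1) ^ p) * (u / x) ^ (p + 1) ≤ p * u ^ (p + 1) * ((x - 1)⁻¹ - x⁻¹) := by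
  have hx0 : 0 < x := by linarith
  have hpow : x ^ (p + 1) = x ^ (p - 1) * x ^ 2 := by
    rw [← Real.rpow_natCast, ← Real.rpow_add hx0]
    ring_nf
  have htelescope : (x - 1)⁻¹ - x⁻¹ = ((x - 1) * x)⁻¹ := by
    field_simp [(sub_pos.2 hx).ne']
    ring
  calc (x ^ p - (x - 1) ^ p) * (u / x) ^ (p + 1)
      ≤ p * x ^ (p - 1) * (u ^ (p + 1) / (x ^ (p - 1) * x ^ 2)) := by
        rw [Real.div_rpow hu hx0.le, hpow]
        gcongr
        exact rpow_sub_rpow_sub_one_le hp hx.le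
    _ = p * u ^ (p + 1) * (x ^ 2)⁻¹ := by
        field_simp [(Real.rpow_pos_of_pos hx0 (p - 1)).ne']
    _ ≤ p * u ^ (p + 1) * ((x - 1)⁻¹ - x⁻¹) := by
        rw [htelescope]
        gcongr
        nlinarith

lemma sum_Ioc_rpow_sub_rpow_sub_one_mul_div_rpow_le {p : ℝ} (hp : 1 ≤ p) {u : ℕ} (hu : 0 < u)
    (N : ℕ) :
    ∑ t ∈ Ioc u N, ((t : ℝ) ^ p - ((t : ℝ) - 1) ^ p) * ((u : ℝ) / t) ^ (p + 1) ≤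
      p * (u : ℝ) ^ p := by
  have hu0 : (0 : ℝ) < u := by exact_mod_cast hu
  calc ∑ t ∈ Ioc u N, ((t : ℝ) ^ p - ((t : ℝ) - 1) ^ p) * ((u : ℝ) / t) ^ (p + 1)
      ≤ ∑ t ∈ Ioc u N, p * (u : ℝ) ^ (p + 1) * (((t : ℝ) - 1)⁻¹ - (t : ℝ)⁻¹) := by
        refine sum_le_sum fun t ht ↦ rpow_sub_rpow_sub_one_mul_div_rpow_le hp hu0.le ?_
        exact Nat.one_lt_cast.2 (Nat.one_le_of_lt hu |>.trans_lt (mem_Ioc.1 ht).1)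
    _ = p * (u : ℝ) ^ (p + 1) * ∑ t ∈ Ioc u N, (((t : ℝ) - 1)⁻¹ - (t : ℝ)⁻¹) := (mul_sum ..).symm
    _ ≤ p * (u : ℝ) ^ (p + 1) * (u : ℝ)⁻¹ := by
        gcongr
        exact sum_Ioc_inv_sub_one_sub_inv_le u N
    _ = p * (u : ℝ) ^ p := by
        rw [Real.rpow_add_one hu0.ne']
        field_simp

theorem lp_norm_extreme_point_bound (p : ℝ) (hp : 1 ≤ p) (u : ℕ) (hu : 0 < u) :
    (u : ℝ) ^ p + ∑' t : {t : ℕ // u < t},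
        ((((t : ℕ) : ℝ)) ^ p - (((t : ℕ) : ℝ) - 1) ^ p) * ((u : ℝ) / ((t : ℕ) : ℝ)) ^ (p + 1) ≤
      (p + 1) * (u : ℝ) ^ p := by
  have hterm_nonneg : ∀ t : ℕ, u < t →
      0 ≤ ((t : ℝ) ^ p - ((t : ℝ) - 1) ^ p) * ((u : ℝ) / t) ^ (p + 1) := by
    intro t ht
    have ht1 : (1 : ℝ) ≤ t := by exact_mod_cast hu.trans ht
    have hmono : ((t : ℝ) - 1) ^ p ≤ (t : ℝ) ^ p :=
      Real.rpow_le_rpow (by linarith) (by linarith) (by linarith)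
    exact mul_nonneg (sub_nonneg.2 hmono) (by positivity)
  calc _ ≤ (u : ℝ) ^ p + p * (u : ℝ) ^ p :=
        add_le_add_right (tsum_subtype_lt_le_of_sum_Ioc_le hterm_nonneg
          (sum_Ioc_rpow_sub_rpow_sub_one_mul_div_rpow_le hp hu)) _
    _ = (p + 1) * (u : ℝ) ^ p := by ring
end
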